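/- arXiv:2412.06700 — 2 statements merged into one kernel-verified Lean document; each statement's English description precedes it below -/
import Mathlib

section
/- Let ℓ: ℝ → ℝ be a differentiable, strictly convex, decreasing function with ℓ'(t) → 0 as t → ∞, let α > 0, and suppose x and x' satisfy α·ℓ'(x)/ℓ'(-x) = r and α·ℓ'(x')/ℓ'(-x') = r' for positive reals r, r'. Then r > r' if and only if x < x'. -/
theorem lift_order_reversing (ℓ : ℝ → ℝ) (hdiff : Differentiable ℝ ℓ)
    (hconv : StrictConvexOn ℝ Set.univ ℓ) (hanti : StrictAnti ℓ)
    (hlim : Filter.Tendsto (deriv ℓ) Filter.atTop (nhds 0))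
    (α : ℝ) (hα : 0 < α) (x x' r r' : ℝ) (hr : 0 < r) (hr' : 0 < r')
    (hx : α * deriv ℓ x / deriv ℓ (-x) = r)
    (hx' : α * deriv ℓ x' / deriv ℓ (-x') = r') :
    r > r' ↔ x < x' := by
  have hmono : StrictMono (deriv ℓ) := by
    have := hconv.strictMonoOn_deriv (fun x _ => hdiff x)
    intro a b hab
    exact this (Set.mem_univ a) (Set.mem_univ b) hab
  have hneg : ∀ t : ℝ, deriv ℓ t < 0 := by
    intro t
    have h1 : deriv ℓ (t + 1) ≤ 0 := by
      refine ge_of_tendsto hlim ?_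
      filter_upwards [Filter.eventually_ge_atTop (t + 2)] with u hu
      exact (hmono (by linarith)).le
    exact lt_of_lt_of_le (hmono (by linarith)) h1
  have hsa : StrictAnti (fun t : ℝ => α * deriv ℓ t / deriv ℓ (-t)) := by
    intro a b hab
    simp only
    have hA := hneg a
    have hB := hneg b
    have hA' := hneg (-a)
    have hB' := hneg (-b)
    have hAB : deriv ℓ a < deriv ℓ b := hmono hab
    have hBA' : deriv ℓ (-b) < deriv ℓ (-a) := hmono (by linarith)
    have e : ∀ p q : ℝ, p / q = -p / -q := fun p q => (neg_div_neg_eq p q).symm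
    rw [e (α * deriv ℓ b), e (α * deriv ℓ a), div_lt_div_iff₀ (by linarith) (by linarith)]
    have h1 : (-deriv ℓ b) * (-deriv ℓ (-a)) < (-deriv ℓ a) * (-deriv ℓ (-b)) :=
      mul_lt_mul'' (by linarith) (by linarith) (by linarith) (by linarith)
    nlinarith [mul_lt_mul_of_pos_left h1 hα]
  subst hx hx'
  exact StrictAnti.lt_iff_gt hsa
end

section
/- Let A = {1,...,n_a} and C = {1,...,n_c} be finite sets, and let P be a probability distribution on A × C with strictly positive marginals. Let ℓ: ℝ → ℝ be a differentiable, strictly convex, decreasing function with ℓ'(t) → 0 as t → ∞, and let α > 0. Define the risk of f: A × C → ℝ as R(f) = Σ_{a,c} [P(a,c)·ℓ(-f(a,c)) + α·P(a)·P(c)·ℓ(f(a,c))], where P(a), P(c) are marginals. Suppose f* minimizes R over all functions A × C → ℝ, and suppose every pair (a,c) has P(a,c) > 0. Then for all a, a' ∈ A and c, c' ∈ C: f*(a,c) < f*(a',c') if and only if P(a,c)/(P(a)P(c)) > P(a',c')/(P(a')P(c')). -/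
open Finset

theorem positive_sampling_learns_lift (na nc : ℕ)
    (P : Fin na × Fin nc → ℝ) (hpos : ∀ p, 0 < P p) (hsum : ∑ p, P p = 1)
    (ℓ : ℝ → ℝ) (hdiff : Differentiable ℝ ℓ)
    (hconv : StrictConvexOn ℝ Set.univ ℓ) (hanti : StrictAnti ℓ)
    (hlim : Filter.Tendsto (deriv ℓ) Filter.atTop (nhds 0))
    (α : ℝ) (hα : 0 < α)
    (fstar : Fin na → Fin nc → ℝ)
    (hmin : ∀ g : Fin na → Fin nc → ℝ,
      (∑ a, ∑ c, (P (a, c) * ℓ (-(fstar a c)) +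
        α * (∑ c', P (a, c')) * (∑ a', P (a', c)) * ℓ (fstar a c))) ≤
      ∑ a, ∑ c, (P (a, c) * ℓ (-(g a c)) +
        α * (∑ c', P (a, c')) * (∑ a', P (a', c)) * ℓ (g a c))) :
    ∀ (a a' : Fin na) (c c' : Fin nc),
      fstar a c < fstar a' c' ↔
        P (a, c) / ((∑ c₀, P (a, c₀)) * (∑ a₀, P (a₀, c))) >
          P (a', c') / ((∑ c₀, P (a', c₀)) * (∑ a₀, P (a₀, c'))) := by
  -- deriv ℓ is strictly monotone
  have hmono : StrictMono (deriv ℓ) := by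
    have := hconv.strictMonoOn_deriv (fun x _ => hdiff.differentiableAt)
    intro x y hxy
    exact this (Set.mem_univ x) (Set.mem_univ y) hxy
  -- deriv ℓ is negative everywhere
  have hneg : ∀ t, deriv ℓ t < 0 := by
    intro t
    have h1 : deriv ℓ (t + 1) ≤ 0 := by
      refine ge_of_tendsto hlim ?_
      filter_upwards [Filter.eventually_ge_atTop (t + 1)] with s hs
      exact (hmono.monotone hs)
    have := hmono (lt_add_one t)
    linarith
  -- pointwise optimality: for each pair, fstar a c minimizes the pointwise loss
  have hpt : ∀ (a : Fin na) (c : Fin nc) (t : ℝ),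
      P (a, c) * ℓ (-(fstar a c)) +
        α * (∑ c', P (a, c')) * (∑ a', P (a', c)) * ℓ (fstar a c) ≤
      P (a, c) * ℓ (-t) +
        α * (∑ c', P (a, c')) * (∑ a', P (a', c)) * ℓ t := by
    intro a c t
    set g : Fin na → Fin nc → ℝ :=
      fun a₀ c₀ => if a₀ = a ∧ c₀ = c then t else fstar a₀ c₀ with hg
    have key := hmin g
    have split : ∀ v : Fin na → Fin nc → ℝ,
        (∑ a₀, ∑ c₀, (P (a₀, c₀) * ℓ (-(v a₀ c₀)) +
          α * (∑ c', P (a₀, c')) * (∑ a', P (a', c₀)) * ℓ (v a₀ c₀))) =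
          (P (a, c) * ℓ (-(v a c)) +
            α * (∑ c', P (a, c')) * (∑ a', P (a', c)) * ℓ (v a c)) +
          ∑ p ∈ (Finset.univ : Finset (Fin na × Fin nc)).erase (a, c),
            (P p * ℓ (-(v p.1 p.2)) +
              α * (∑ c', P (p.1, c')) * (∑ a', P (a', p.2)) * ℓ (v p.1 p.2)) := by
      intro v
      rw [← Finset.sum_product', ← Finset.univ_product_univ]
      exact (Finset.add_sum_erase _ (fun p => P p * ℓ (-(v p.1 p.2)) +
        α * (∑ c', P (p.1, c')) * (∑ a', P (a', p.2)) * ℓ (v p.1 p.2))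
        (Finset.mem_univ (a, c))).symm
    rw [split, split] at key
    have heq : ∀ p ∈ (Finset.univ : Finset (Fin na × Fin nc)).erase (a, c),
        P p * ℓ (-(g p.1 p.2)) +
          α * (∑ c', P (p.1, c')) * (∑ a', P (a', p.2)) * ℓ (g p.1 p.2) =
        P p * ℓ (-(fstar p.1 p.2)) +
          α * (∑ c', P (p.1, c')) * (∑ a', P (a', p.2)) * ℓ (fstar p.1 p.2) := by
      intro p hp
      have hne : p ≠ (a, c) := Finset.ne_of_mem_erase hp
      have hgp : g p.1 p.2 = fstar p.1 p.2 := by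
        rw [hg]
        simp only
        rw [if_neg]
        rintro ⟨h1, h2⟩
        exact hne (Prod.ext h1 h2)
      rw [hgp]
    rw [Finset.sum_congr rfl heq] at key
    have hgac : g a c = t := by rw [hg]; simp
    rw [hgac] at key
    exact le_of_add_le_add_right key
  -- first order condition
  have hfoc : ∀ (a : Fin na) (c : Fin nc),
      P (a, c) / ((∑ c₀, P (a, c₀)) * (∑ a₀, P (a₀, c))) =
        α * (deriv ℓ (fstar a c) / deriv ℓ (-(fstar a c))) := by
    intro a c
    have hPa : 0 < ∑ c', P (a, c') :=
      Finset.sum_pos (fun c' _ => hpos _) ⟨c, Finset.mem_univ c⟩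
    have hPc : 0 < ∑ a', P (a', c) :=
      Finset.sum_pos (fun a' _ => hpos _) ⟨a, Finset.mem_univ a⟩
    have hp0 : 0 < P (a, c) := hpos _
    set p := P (a, c) with hp
    set q := α * (∑ c', P (a, c')) * (∑ a', P (a', c)) with hq
    set t0 := fstar a c with ht0
    have hq0 : 0 < q := by rw [hq]; positivity
    have hminon : IsMinOn (fun t => p * ℓ (-t) + q * ℓ t) Set.univ t0 :=
      isMinOn_iff.mpr fun t _ => hpt a c t
    have hmin' : IsLocalMin (fun t => p * ℓ (-t) + q * ℓ t) t0 :=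
      hminon.isLocalMin Filter.univ_mem
    have hd : HasDerivAt (fun t => p * ℓ (-t) + q * ℓ t)
        (p * (deriv ℓ (-t0) * (-1)) + q * deriv ℓ t0) t0 := by
      have h1 : HasDerivAt (fun t : ℝ => ℓ (-t)) (deriv ℓ (-t0) * (-1)) t0 :=
        (hdiff (-t0)).hasDerivAt.comp t0 (hasDerivAt_neg t0)
      exact (h1.const_mul p).add ((hdiff t0).hasDerivAt.const_mul q)
    have hzero : p * (deriv ℓ (-t0) * (-1)) + q * deriv ℓ t0 = 0 := by
      have := hmin'.deriv_eq_zero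
      rwa [hd.deriv] at this
    have hne : deriv ℓ (-t0) ≠ 0 := (hneg _).ne
    have hpeq : p = q * (deriv ℓ t0 / deriv ℓ (-t0)) := by
      field_simp
      linarith
    rw [hpeq, hq]
    field_simp
  -- the ratio map is strictly antitone
  have hratio : ∀ s t : ℝ, s < t →
      deriv ℓ t / deriv ℓ (-t) < deriv ℓ s / deriv ℓ (-s) := by
    intro s t hst
    have h1 : deriv ℓ s < deriv ℓ t := hmono hst
    have h2 : deriv ℓ (-t) < deriv ℓ (-s) := hmono (by linarith)
    have h3 := hneg s
    have h4 := hneg t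
    have h5 := hneg (-s)
    have h6 := hneg (-t)
    rw [show deriv ℓ t / deriv ℓ (-t) = (-(deriv ℓ t)) / (-(deriv ℓ (-t))) from
        (neg_div_neg_eq _ _).symm,
      show deriv ℓ s / deriv ℓ (-s) = (-(deriv ℓ s)) / (-(deriv ℓ (-s))) from
        (neg_div_neg_eq _ _).symm,
      div_lt_div_iff₀ (by linarith) (by linarith)]
    nlinarith
  intro a a' c c'
  rw [hfoc a c, hfoc a' c']
  constructor
  · intro h
    exact (mul_lt_mul_iff_right₀ hα).2 (hratio _ _ h)
  · intro h
    by_contra hle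
    push_neg at hle
    rcases eq_or_lt_of_le hle with heq | hlt
    · rw [heq] at h; exact lt_irrefl _ h
    · have := (mul_lt_mul_iff_right₀ hα).2 (hratio _ _ hlt)
      linarith
end
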